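/- For any continuation (p1,p2R,p2A,t) with p1>0, the seller's expected revenue conditional on the buyer being naive, R_n = p1(1-F(p1)) + E[p2A(1-F(p2A))] + E[p2R(F(p1)-F(p2R))·1(p2R≤p1)], is at least the seller's expected revenue conditional on the buyer being sophisticated, R_s = p1(1-F(t)) + E[p2A(1-F(p2A))·1(p2A≤t)] + E[p2R(F(t)-F(p2R))]. -/

import Mathlib

open MeasureTheory Set Filter

noncomputable section

namespace RepeatedSales

/-- `F` is the CDF of an atomless distribution fully supported on `[0,1]`:
continuous, strictly increasing on `[0,1]`, with `F 0 = 0` and `F 1 = 1`. -/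
structure NiceCDF (F : ℝ → ℝ) : Prop where
  cont : Continuous F
  mono : StrictMonoOn F (Icc (0:ℝ) 1)
  zero : F 0 = 0
  one : F 1 = 1

/-- The (price-posting) revenue curve `R(p) = p (1 - F p)`. -/
def Rcurve (F : ℝ → ℝ) (p : ℝ) : ℝ := p * (1 - F p)

/-- The CDF truncated at `x` from above: `F_{≤x}(v) = min (F v / F x) 1`. -/
def Fle (F : ℝ → ℝ) (x v : ℝ) : ℝ := min (F v / F x) 1

/-- The CDF truncated at `x` from below: `F_{≥x}(v) = max ((F v - F x)/(1 - F x)) 0`. -/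
def Fge (F : ℝ → ℝ) (x v : ℝ) : ℝ := max ((F v - F x) / (1 - F x)) 0

/-- Revenue curve of the truncated distribution `F_{≤x}`. -/
def Rle (F : ℝ → ℝ) (x p : ℝ) : ℝ := p * (1 - Fle F x p)

/-- Revenue curve of the truncated distribution `F_{≥x}`. -/
def Rge (F : ℝ → ℝ) (x p : ℝ) : ℝ := p * (1 - Fge F x p)

/-- Posterior probability of sophistication after a reject. -/
def muR (F : ℝ → ℝ) (μ p1 t : ℝ) : ℝ := μ * F t / (μ * F t + (1 - μ) * F p1)

/-- Posterior probability of sophistication after an accept. -/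
def muA (F : ℝ → ℝ) (μ p1 t : ℝ) : ℝ :=
  μ * (1 - F t) / (μ * (1 - F t) + (1 - μ) * (1 - F p1))

/-- The seller's posterior CDF over values after a first-round reject. -/
def FrejCDF (F : ℝ → ℝ) (μ p1 t v : ℝ) : ℝ :=
  muR F μ p1 t * Fle F t v + (1 - muR F μ p1 t) * Fle F p1 v

/-- The seller's posterior CDF over values after a first-round accept. -/
def FaccCDF (F : ℝ → ℝ) (μ p1 t v : ℝ) : ℝ :=
  muA F μ p1 t * Fge F t v + (1 - muA F μ p1 t) * Fge F p1 v

/-- The second-round revenue curve conditioned on a reject. -/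
def Rrej (F : ℝ → ℝ) (μ p1 t p : ℝ) : ℝ := p * (1 - FrejCDF F μ p1 t p)

/-- The second-round revenue curve conditioned on an accept. -/
def Racc (F : ℝ → ℝ) (μ p1 t p : ℝ) : ℝ := p * (1 - FaccCDF F μ p1 t p)

/-- The (topological) support of a measure on `ℝ`: points all of whose
neighborhoods have positive measure. -/
def msupp (ν : Measure ℝ) : Set ℝ := {x | ∀ U ∈ nhds x, ν U ≠ 0}

/-- A continuation `(p1, p2R, p2A, t)` at sophistication level `μ`:
`p2R`, `p2A` are (random) prices, i.e. probability measures supported in `[0,1]`,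
every point of the support of `p2R` (resp. `p2A`) maximizes the reject (resp. accept)
revenue curve over `[0,1]`, and the threshold indifference equation holds.
The denominators defining the posteriors are assumed positive. -/
structure Continuation (F : ℝ → ℝ) (μ p1 : ℝ) (p2R p2A : Measure ℝ) (t : ℝ) : Prop where
  denR_pos : 0 < μ * F t + (1 - μ) * F p1
  denA_pos : 0 < μ * (1 - F t) + (1 - μ) * (1 - F p1)
  probR : IsProbabilityMeasure p2R
  probA : IsProbabilityMeasure p2A
  suppR01 : msupp p2R ⊆ Icc 0 1
  suppA01 : msupp p2A ⊆ Icc 0 1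
  optR : ∀ p ∈ msupp p2R, IsMaxOn (Rrej F μ p1 t) (Icc 0 1) p
  optA : ∀ p ∈ msupp p2A, IsMaxOn (Racc F μ p1 t) (Icc 0 1) p
  indiff : t - p1 + (∫ x, max (t - x) 0 ∂p2A) = ∫ x, max (t - x) 0 ∂p2R

/-- A continuation with deterministic accept price `p2A ≥ t`. -/
def SophFocused (p2A : Measure ℝ) (t : ℝ) : Prop :=
  ∃ a : ℝ, p2A = Measure.dirac a ∧ t ≤ a

/-- A continuation with deterministic accept price `p2A < t`. -/
def NaiveFocused (p2A : Measure ℝ) (t : ℝ) : Prop :=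
  ∃ a : ℝ, p2A = Measure.dirac a ∧ a < t

/-- The seller's expected revenue of a continuation at sophistication `μ`. -/
def sellerRev (F : ℝ → ℝ) (μ p1 t : ℝ) (p2R p2A : Measure ℝ) : ℝ :=
  μ * (p1 * (1 - F t) + (∫ a, (if a ≤ t then a * (1 - F a) else 0) ∂p2A)
      + ∫ r, r * (F t - F r) ∂p2R)
  + (1 - μ) * (p1 * (1 - F p1) + (∫ a, a * (1 - F a) ∂p2A)
      + ∫ r, (if r ≤ p1 then r * (F p1 - F r) else 0) ∂p2R)

/-
If `t < p1`, no buyer with value below `t` accepts, so every optimal accept price is at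
least `t` and the indifference equation forces `t - p1 ≥ 0`. Hence `p1 ≤ t` and
`Δ = F t - F p1 ≥ 0`. Compared with a naive buyer, a sophisticated one pays `p1` on the
smaller event `{v ≥ t}` (a loss of `p1 Δ`) and never pays an accept price above `t`.
After a reject he buys at `r` when `v ∈ [r, t]` instead of `v ∈ [r, p1]`; this extra
revenue `r (F t - F r) - r (F p1 - F r)⁺` is at most `Δ · min r t`, and the indifference
equation bounds `E[min p2R t] = t - E[(t - p2R)⁺]` by `p1`. So the sophisticated buyer's
extra revenue is at most `Δ p1`, exactly his first-round loss.
-/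

lemma msupp_eq_support (ν : Measure ℝ) : msupp ν = ν.support := by
  ext x
  simp [msupp, Measure.mem_support_iff_forall, pos_iff_ne_zero]

lemma ae_mem_of_msupp_subset {ν : Measure ℝ} {s : Set ℝ} (h : msupp ν ⊆ s) :
    ∀ᵐ x ∂ν, x ∈ s :=
  mem_of_superset (msupp_eq_support ν ▸ Measure.support_mem_ae) h

lemma integrable_of_msupp_subset {ν : Measure ℝ} [IsFiniteMeasure ν] {K : Set ℝ}
    (hK : IsCompact K) (h : msupp ν ⊆ K) {f : ℝ → ℝ} (hf : ContinuousOn f K) :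
    Integrable f ν := by
  rw [← Measure.restrict_eq_self_of_ae_mem (ae_mem_of_msupp_subset h)]
  exact hf.integrableOn_compact hK

lemma _root_.MeasureTheory.Integrable.ite_le {ν : Measure ℝ} {f : ℝ → ℝ}
    (hf : Integrable f ν) (c : ℝ) : Integrable (fun x => if x ≤ c then f x else 0) ν :=
  (hf.indicator (measurableSet_Iic (a := c))).congr
    (ae_of_all _ fun x => by simp [indicator_apply])

namespace NiceCDF

lemma monotoneOn {F : ℝ → ℝ} (hF : NiceCDF F) : MonotoneOn F (Icc 0 1) :=
  hF.mono.monotoneOn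

lemma mem_Icc {F : ℝ → ℝ} (hF : NiceCDF F) {x : ℝ} (hx : x ∈ Icc (0:ℝ) 1) :
    F x ∈ Icc (0:ℝ) 1 :=
  ⟨hF.zero ▸ hF.monotoneOn ⟨le_rfl, zero_le_one⟩ hx hx.1,
    hF.one ▸ hF.monotoneOn hx ⟨zero_le_one, le_rfl⟩ hx.2⟩

end NiceCDF

section Accept

variable {F : ℝ → ℝ} {μ p1 t : ℝ}

lemma Fge_eq_zero {x v : ℝ} (hv : F v ≤ F x) (hx : F x ≤ 1) : Fge F x v = 0 :=
  max_eq_right (div_nonpos_of_nonpos_of_nonneg (by linarith) (by linarith))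

lemma muA_mem_Icc (hμ : μ ∈ Icc (0:ℝ) 1) (ht : F t ≤ 1) (hp1 : F p1 ≤ 1)
    (hden : 0 < μ * (1 - F t) + (1 - μ) * (1 - F p1)) : muA F μ p1 t ∈ Icc (0:ℝ) 1 := by
  refine ⟨div_nonneg (mul_nonneg hμ.1 (by linarith)) hden.le, (div_le_one hden).2 ?_⟩
  nlinarith [hμ.2]

lemma FaccCDF_nonneg (hμA : muA F μ p1 t ∈ Icc (0:ℝ) 1) (v : ℝ) :
    0 ≤ FaccCDF F μ p1 t v :=
  add_nonneg (mul_nonneg hμA.1 (le_max_right _ _))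
    (mul_nonneg (sub_nonneg.2 hμA.2) (le_max_right _ _))

lemma Racc_le_self (hμA : muA F μ p1 t ∈ Icc (0:ℝ) 1) {a : ℝ} (ha : 0 ≤ a) :
    Racc F μ p1 t a ≤ a :=
  mul_le_of_le_one_right ha (by linarith [FaccCDF_nonneg hμA a])

lemma Racc_self (ht : F t ≤ 1) (hp1 : F p1 ≤ 1) (htp1 : F t ≤ F p1) :
    Racc F μ p1 t t = t := by
  simp [Racc, FaccCDF, Fge_eq_zero le_rfl ht, Fge_eq_zero htp1 hp1]

/-- If `t ≤ p1`, no buyer with value below `t` accepts, so the accept revenue curve equals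
the price at `t` and lies below the price everywhere. -/
lemma le_of_isMaxOn_Racc (hF : NiceCDF F) (hμ : μ ∈ Icc (0:ℝ) 1) (hp1 : p1 ∈ Icc (0:ℝ) 1)
    (ht : t ∈ Icc (0:ℝ) 1) (htp1 : t ≤ p1)
    (hden : 0 < μ * (1 - F t) + (1 - μ) * (1 - F p1)) {a : ℝ} (ha : a ∈ Icc (0:ℝ) 1)
    (hmax : IsMaxOn (Racc F μ p1 t) (Icc 0 1) a) : t ≤ a := by
  have hFt := (hF.mem_Icc ht).2
  have hFp1 := (hF.mem_Icc hp1).2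
  calc t = Racc F μ p1 t t := (Racc_self hFt hFp1 (hF.monotoneOn ht hp1 htp1)).symm
    _ ≤ Racc F μ p1 t a := hmax ht
    _ ≤ a := Racc_le_self (muA_mem_Icc hμ hFt hFp1 hden) ha.1

end Accept

namespace Continuation

variable {F : ℝ → ℝ} {μ p1 t : ℝ} {p2R p2A : Measure ℝ}

lemma le_threshold (hc : Continuation F μ p1 p2R p2A t) (hF : NiceCDF F)
    (hμ : μ ∈ Icc (0:ℝ) 1) (hp1 : p1 ∈ Icc (0:ℝ) 1) (ht : t ∈ Icc (0:ℝ) 1) :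
    p1 ≤ t := by
  by_contra! htp1
  have hA : ∫ x, max (t - x) 0 ∂p2A = 0 := by
    refine integral_eq_zero_of_ae ?_
    filter_upwards [ae_mem_of_msupp_subset subset_rfl] with a ha
    have := le_of_isMaxOn_Racc hF hμ hp1 ht htp1.le hc.denA_pos (hc.suppA01 ha) (hc.optA a ha)
    simpa using this
  have hR : 0 ≤ ∫ x, max (t - x) 0 ∂p2R := integral_nonneg fun x => le_max_right _ _
  linarith [hc.indiff]

lemma integral_min_le (hc : Continuation F μ p1 p2R p2A t) : ∫ x, min x t ∂p2R ≤ p1 := by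
  have := hc.probR
  have hmin : (fun x => min x t) = fun x => t - max (t - x) 0 := by
    ext x
    rcases le_total x t with h | h <;> simp [h]
  have hA : 0 ≤ ∫ x, max (t - x) 0 ∂p2A := integral_nonneg fun x => le_max_right _ _
  have hint : Integrable (fun x => max (t - x) 0) p2R :=
    integrable_of_msupp_subset isCompact_Icc hc.suppR01 (by fun_prop)
  rw [hmin, integral_sub (integrable_const t) hint, integral_const, probReal_univ, one_smul]
  linarith [hc.indiff]

end Continuation

section Revenue

variable {F : ℝ → ℝ} {p1 t : ℝ} {ν : Measure ℝ} [IsFiniteMeasure ν]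

lemma integral_ite_revenue_le (hF : NiceCDF F) (hν : msupp ν ⊆ Icc 0 1) (t : ℝ) :
    ∫ a, (if a ≤ t then a * (1 - F a) else 0) ∂ν ≤ ∫ a, a * (1 - F a) ∂ν := by
  have hint : Integrable (fun a => a * (1 - F a)) ν :=
    integrable_of_msupp_subset isCompact_Icc hν (by have := hF.cont; fun_prop)
  refine integral_mono_ae (hint.ite_le t) hint ?_
  filter_upwards [ae_mem_of_msupp_subset hν] with a ha
  have : 0 ≤ a * (1 - F a) := mul_nonneg ha.1 (sub_nonneg.2 (hF.mem_Icc ha).2)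
  split_ifs <;> linarith

lemma mul_sub_le_ite_add_mul_min (hF : NiceCDF F) (hp1 : p1 ∈ Icc (0:ℝ) 1)
    (ht : t ∈ Icc (0:ℝ) 1) (hp1t : p1 ≤ t) {r : ℝ} (hr : r ∈ Icc (0:ℝ) 1) :
    r * (F t - F r) ≤ (if r ≤ p1 then r * (F p1 - F r) else 0) + (F t - F p1) * min r t := by
  have hΔ : 0 ≤ F t - F p1 := sub_nonneg.2 (hF.monotoneOn hp1 ht hp1t)
  split_ifs with hrp1
  · rw [min_eq_left (hrp1.trans hp1t)]
    linarith
  · have hFr : F p1 ≤ F r := hF.monotoneOn hp1 hr (le_of_not_ge hrp1)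
    rcases le_total r t with hrt | htr
    · rw [min_eq_left hrt]
      nlinarith [hr.1]
    · rw [min_eq_right htr]
      nlinarith [hr.1, ht.1, hF.monotoneOn ht hr htr]

lemma integral_mul_sub_le (hF : NiceCDF F) (hν : msupp ν ⊆ Icc 0 1) (hp1 : p1 ∈ Icc (0:ℝ) 1)
    (ht : t ∈ Icc (0:ℝ) 1) (hp1t : p1 ≤ t) :
    ∫ r, r * (F t - F r) ∂ν ≤ (∫ r, (if r ≤ p1 then r * (F p1 - F r) else 0) ∂ν)
      + (F t - F p1) * ∫ r, min r t ∂ν := by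
  have := hF.cont
  have hite : Integrable (fun r => if r ≤ p1 then r * (F p1 - F r) else 0) ν :=
    (integrable_of_msupp_subset isCompact_Icc hν (by fun_prop)).ite_le p1
  have hmin : Integrable (fun r => (F t - F p1) * min r t) ν :=
    integrable_of_msupp_subset isCompact_Icc hν (by fun_prop)
  rw [← integral_const_mul, ← integral_add hite hmin]
  refine integral_mono_ae (integrable_of_msupp_subset isCompact_Icc hν (by fun_prop))
    (hite.add hmin) ?_
  filter_upwards [ae_mem_of_msupp_subset hν] with r hr
  exact mul_sub_le_ite_add_mul_min hF hp1 ht hp1t hr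

end Revenue

theorem naive_revenue_ge_sophisticated_revenue_general
    (F : ℝ → ℝ) (hF : NiceCDF F)
    (μ p1 t : ℝ) (p2R p2A : Measure ℝ)
    (hμ : μ ∈ Icc (0:ℝ) 1) (hp1 : p1 ∈ Ioc (0:ℝ) 1) (ht : t ∈ Icc (0:ℝ) 1)
    (hc : Continuation F μ p1 p2R p2A t) :
    p1 * (1 - F t) + (∫ a, (if a ≤ t then a * (1 - F a) else 0) ∂p2A)
        + (∫ r, r * (F t - F r) ∂p2R)
      ≤ p1 * (1 - F p1) + (∫ a, a * (1 - F a) ∂p2A)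
        + (∫ r, (if r ≤ p1 then r * (F p1 - F r) else 0) ∂p2R) := by
  have := hc.probA
  have := hc.probR
  have hp1' : p1 ∈ Icc (0:ℝ) 1 := Ioc_subset_Icc_self hp1
  have hp1t : p1 ≤ t := hc.le_threshold hF hμ hp1' ht
  have hΔ : 0 ≤ F t - F p1 := sub_nonneg.2 (hF.monotoneOn hp1' ht hp1t)
  have hA := integral_ite_revenue_le hF hc.suppA01 t
  have hR := integral_mul_sub_le hF hc.suppR01 hp1' ht hp1t
  have hmin := mul_le_mul_of_nonneg_left hc.integral_min_le hΔ
  linarith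

/-- **Theorem: naive buyers are more lucrative per capita.** For any
continuation `(p1,p2R,p2A,t)` with `p1 > 0`, the seller's expected revenue
conditional on the buyer being naive is at least the expected revenue conditional
on the buyer being sophisticated. -/
theorem naive_revenue_ge_sophisticated_revenue
    (F : ℝ → ℝ) (hF : NiceCDF F)
    (hcon : StrictConcaveOn ℝ (Icc (0:ℝ) 1) (Rcurve F))
    (μ p1 t : ℝ) (p2R p2A : Measure ℝ)
    (hμ : μ ∈ Icc (0:ℝ) 1) (hp1 : p1 ∈ Ioc (0:ℝ) 1) (ht : t ∈ Icc (0:ℝ) 1)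
    (hc : Continuation F μ p1 p2R p2A t) :
    p1 * (1 - F t) + (∫ a, (if a ≤ t then a * (1 - F a) else 0) ∂p2A)
        + (∫ r, r * (F t - F r) ∂p2R)
      ≤ p1 * (1 - F p1) + (∫ a, a * (1 - F a) ∂p2A)
        + (∫ r, (if r ≤ p1 then r * (F p1 - F r) else 0) ∂p2R) :=
  naive_revenue_ge_sophisticated_revenue_general F hF μ p1 t p2R p2A hμ hp1 ht hc

end RepeatedSales
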